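/- Let K be a field, V a finite-dimensional K-vector space, B a nondegenerate symmetric bilinear form on V, and f an endomorphism of V that is an isometry of B. Suppose V is the internal direct sum of the eigenspaces of f. Then every eigenvalue λ of f is nonzero, and the map sending v ∈ ker(f − λ·id) to the functional w ↦ B(v,w) on ker(f − λ⁻¹·id) is a linear isomorphism onto the dual space of ker(f − λ⁻¹·id); in particular dim ker(f − λ·id) = dim ker(f − λ⁻¹·id). -/

import Mathlib

/-!
If `f v = a • v` and `f w = b • w`, isometry gives `B v w = a * b * B v w`, so the eigenspaces
for `a` and `b` are `B`-orthogonal unless `a * b = 1`. As `V` is spanned by eigenvectors and `B`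
is nondegenerate, `B` therefore restricts to a nondegenerate pairing between the eigenspaces for
`a` and `a⁻¹`, which in finite dimension is perfect. An isometry of a nondegenerate form is
injective, so `0` is not an eigenvalue.
-/

namespace LinearMap

open Module End

variable {K V : Type*} [Field K] [AddCommGroup V] [Module K V]
  {B : V →ₗ[K] V →ₗ[K] K} {f : End K V}

theorem injective_of_isometry (hB : B.SeparatingLeft) (hiso : ∀ v w, B (f v) (f w) = B v w) :
    Function.Injective f := by
  rw [← ker_eq_bot, ker_eq_bot']
  intro v hv
  exact hB v fun w => by rw [← hiso, hv, map_zero, zero_apply]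

theorem apply_eq_zero_of_mem_eigenspace_of_mul_ne_one (hiso : ∀ v w, B (f v) (f w) = B v w)
    {a b : K} {v w : V} (hv : v ∈ f.eigenspace a) (hw : w ∈ f.eigenspace b) (hab : a * b ≠ 1) :
    B v w = 0 := by
  have h := hiso v w
  rw [mem_eigenspace_iff.mp hv, mem_eigenspace_iff.mp hw, map_smul, map_smul, smul_apply,
    smul_eq_mul, smul_eq_mul, ← mul_assoc] at h
  have : (a * b - 1) * B v w = 0 := by linear_combination h
  exact (mul_eq_zero.mp this).resolve_left (sub_ne_zero.mpr hab)

theorem injective_compl₁₂_eigenspace (hB : B.SeparatingLeft)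
    (hiso : ∀ v w, B (f v) (f w) = B v w) (htop : ⨆ c, f.eigenspace c = ⊤) {a b : K}
    (hab : a * b = 1) :
    Function.Injective (B.compl₁₂ (f.eigenspace a).subtype (f.eigenspace b).subtype) := by
  rw [← ker_eq_bot, ker_eq_bot']
  rintro ⟨v, hv⟩ hv0
  ext
  refine hB v fun w => ?_
  have hw : w ∈ ⨆ c, f.eigenspace c := htop ▸ Submodule.mem_top
  refine Submodule.iSup_induction _ (motive := fun w => B v w = 0) hw (fun c w hw => ?_)
    (map_zero _) fun x y hx hy => by rw [map_add, hx, hy, add_zero]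
  by_cases hcb : c = b
  · subst hcb
    exact LinearMap.congr_fun hv0 ⟨w, hw⟩
  · refine apply_eq_zero_of_mem_eigenspace_of_mul_ne_one hiso hv hw fun hac => hcb ?_
    exact mul_left_cancel₀ (left_ne_zero_of_mul_eq_one hab) (hac.trans hab.symm)

theorem isPerfPair_compl₁₂_eigenspace [FiniteDimensional K V] (hsymm : ∀ v w, B v w = B w v)
    (hB : B.SeparatingLeft) (hiso : ∀ v w, B (f v) (f w) = B v w)
    (htop : ⨆ c, f.eigenspace c = ⊤) {a b : K} (hab : a * b = 1) :
    (B.compl₁₂ (f.eigenspace a).subtype (f.eigenspace b).subtype).IsPerfPair := by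
  have hflip : (B.compl₁₂ (f.eigenspace a).subtype (f.eigenspace b).subtype).flip =
      B.compl₁₂ (f.eigenspace b).subtype (f.eigenspace a).subtype := by
    ext w v
    exact hsymm v w
  refine .of_injective (injective_compl₁₂_eigenspace hB hiso htop hab) ?_
  rw [hflip]
  exact injective_compl₁₂_eigenspace hB hiso htop (by rwa [mul_comm])

end LinearMap

/-- Let `f` be an isometry of a nondegenerate symmetric bilinear form `B` on a
finite-dimensional space `V`, and suppose `V` is the internal direct sum of the
eigenspaces of `f`.  Then every eigenvalue `l` of `f` is nonzero, and the map sending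
`v ∈ ker(f − l·id)` to the functional `w ↦ B(v,w)` on `ker(f − l⁻¹·id)` is a linear
isomorphism onto the dual of `ker(f − l⁻¹·id)`; in particular the two kernels have the
same dimension. -/
theorem stmt6 (K V : Type*) [Field K] [DecidableEq K] [AddCommGroup V] [Module K V]
    [FiniteDimensional K V]
    (B : V →ₗ[K] V →ₗ[K] K)
    (hsymm : ∀ v w, B v w = B w v)
    (hnondeg : ∀ v, (∀ w, B v w = 0) → v = 0)
    (f : V →ₗ[K] V)
    (hiso : ∀ v w, B (f v) (f w) = B v w)
    (hint : DirectSum.IsInternal fun c : K => LinearMap.ker (f - c • (LinearMap.id : V →ₗ[K] V)))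
    (l : K) (hl : LinearMap.ker (f - l • (LinearMap.id : V →ₗ[K] V)) ≠ ⊥) :
    l ≠ 0 ∧
    ∃ e : LinearMap.ker (f - l • (LinearMap.id : V →ₗ[K] V)) ≃ₗ[K]
        Module.Dual K (LinearMap.ker (f - l⁻¹ • (LinearMap.id : V →ₗ[K] V))),
      (∀ (v : LinearMap.ker (f - l • (LinearMap.id : V →ₗ[K] V)))
          (w : LinearMap.ker (f - l⁻¹ • (LinearMap.id : V →ₗ[K] V))),
        e v w = B v w) ∧
      Module.finrank K (LinearMap.ker (f - l • (LinearMap.id : V →ₗ[K] V))) =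
        Module.finrank K (LinearMap.ker (f - l⁻¹ • (LinearMap.id : V →ₗ[K] V))) := by
  have hE (c : K) : LinearMap.ker (f - c • LinearMap.id) = Module.End.eigenspace f c := by
    rw [Module.End.eigenspace_def, Module.End.one_eq_id]
  simp only [hE] at hint hl
  rw [hE, hE]
  have hl0 : l ≠ 0 := by
    rintro rfl
    rw [Module.End.eigenspace_zero, Ne, LinearMap.ker_eq_bot] at hl
    exact hl (LinearMap.injective_of_isometry hnondeg hiso)
  have := LinearMap.isPerfPair_compl₁₂_eigenspace hsymm hnondeg hiso
    hint.submodule_iSup_eq_top (mul_inv_cancel₀ hl0)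
  let e := (B.compl₁₂ (Module.End.eigenspace f l).subtype
    (Module.End.eigenspace f l⁻¹).subtype).toPerfPair
  exact ⟨hl0, e, fun _ _ => rfl, e.finrank_eq.trans Subspace.dual_finrank_eq⟩
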